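/- arXiv:1804.09821 — 2 statements merged into one kernel-verified Lean document; each statement's English description precedes it below -/
import Mathlib

section
/- Fix u ∈ ℂ with 0 < |u| < 1 and set q = u^{24}, p = u^{12}. Define θ(x) = ∑_{m∈ℤ} p^{m²} x^m, Π(z) = u³ (z − z^{-1}) ∏_{n=1}^∞ (1 − z²qⁿ)(1 − qⁿ)(1 − z^{-2}qⁿ), and η = u ∏_{n=1}^∞ (1 − qⁿ). Then the function f(z,w) = (θ(zw) − θ(zw^{-1}))/(Π(z)Π(w)), defined on the set where Π(z)Π(w) ≠ 0, tends to (∑_{m∈ℤ} m² p^{m²}) / (2 η⁶) as (z,w) → (1,1) within that set. -/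
/-- The Jacobi theta function of the lattice `ℤ`: `θ_p(x) = ∑_{m ∈ ℤ} p^(m²) x^m`,
where `p = q^(1/2)`. -/
noncomputable def jacobiThetaZ (p x : ℂ) : ℂ := ∑' m : ℤ, p ^ (m ^ 2) * x ^ m

/-- The Weyl denominator
`Π(z) = q^(1/8) (z - z⁻¹) ∏_{n ≥ 1} (1 - z²qⁿ)(1 - qⁿ)(1 - z⁻²qⁿ)`, with `q = u²⁴`,
`q^(1/8) = u³`. -/
noncomputable def weylPi (u z : ℂ) : ℂ :=
  u ^ 3 * (z - z⁻¹) *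
    ∏' n : ℕ, ((1 - z ^ 2 * (u ^ 24) ^ (n + 1)) * (1 - (u ^ 24) ^ (n + 1)) *
      (1 - (z ^ 2)⁻¹ * (u ^ 24) ^ (n + 1)))

/-- The Dedekind eta function `η = q^(1/24) ∏_{n ≥ 1} (1 - qⁿ)`, with `q = u²⁴`,
`q^(1/24) = u`. -/
noncomputable def dedekindEta (u : ℂ) : ℂ := u * ∏' n : ℕ, (1 - (u ^ 24) ^ (n + 1))

/-- The supercharacter of a pair of `bc`-ghosts:
`S(z) = q^(1/12) ∏_{n ≥ 1} (1 - z²qⁿ)(1 - z⁻²q^(n-1))`, with `q = u²⁴`, `q^(1/12) = u²`. -/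
noncomputable def ghostSch (u z : ℂ) : ℂ :=
  u ^ 2 * ∏' n : ℕ, ((1 - z ^ 2 * (u ^ 24) ^ (n + 1)) * (1 - (z ^ 2)⁻¹ * (u ^ 24) ^ n))

/-!
Pairing the terms `m` and `-m` of `θ(zw) - θ(zw⁻¹)` gives `∑_{n ≥ 0} p^(n²) (zⁿ - z⁻ⁿ)(wⁿ - w⁻ⁿ)`,
and `zⁿ - z⁻ⁿ = (z - z⁻¹) χₙ(z)` with `χₙ` the character of the `n`-dimensional representation
of `sl₂`. Writing `Π(z) = u³ (z - z⁻¹) P(z)`, the factors `z - z⁻¹` and `w - w⁻¹` therefore cancel,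
and on the domain the quotient equals `∑ p^(n²) χₙ(z) χₙ(w) / (u⁶ P(z) P(w))`. Both numerator and
denominator are continuous at `(1, 1)` (the series and products converge locally uniformly), with
values `∑_{n ≥ 0} n² p^(n²)` since `χₙ(1) = n`, and `η⁶ ≠ 0` since `P(1) = ∏ (1 - qⁿ)³`.
-/

open Filter Topology Finset

lemma zpow_natCast_sq {G : Type*} [DivInvMonoid G] (a : G) (n : ℕ) :
    a ^ ((n : ℤ) ^ 2) = a ^ (n ^ 2) := by
  rw [← Nat.cast_pow, zpow_natCast]

lemma summable_pow_mul_pow_mul_pow_sq (k : ℕ) (c : ℝ) {r : ℝ} (hr0 : 0 ≤ r) (hr1 : r < 1) :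
    Summable fun n : ℕ => (n : ℝ) ^ k * c ^ n * r ^ (n ^ 2) := by
  have hsmall : ∀ᶠ n : ℕ in atTop, |c| * r ^ n ≤ 2⁻¹ := by
    have h := (tendsto_pow_atTop_nhds_zero_of_lt_one hr0 hr1).const_mul |c|
    rw [mul_zero] at h
    exact h.eventually (eventually_le_nhds (by norm_num))
  refine .of_norm_bounded_eventually_nat
    (summable_pow_mul_geometric_of_norm_lt_one k (r := (2⁻¹ : ℝ)) (by norm_num)) ?_
  filter_upwards [hsmall] with n hn
  -- `c ^ n * r ^ (n ^ 2) = (c * r ^ n) ^ n` decays geometrically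
  calc ‖(n : ℝ) ^ k * c ^ n * r ^ (n ^ 2)‖ = (n : ℝ) ^ k * (|c| * r ^ n) ^ n := by
        simp only [Real.norm_eq_abs, abs_mul, abs_pow, abs_of_nonneg hr0, Nat.abs_cast]
        rw [mul_pow, sq, pow_mul, mul_assoc]
    _ ≤ (n : ℝ) ^ k * 2⁻¹ ^ n := by gcongr

lemma summable_pow_sq_mul_pow {p : ℂ} (hp : ‖p‖ < 1) (x : ℂ) :
    Summable fun n : ℕ => p ^ (n ^ 2) * x ^ n :=
  .of_norm_bounded (summable_pow_mul_pow_mul_pow_sq 0 ‖x‖ (norm_nonneg p) hp) fun n => by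
    simp [mul_comm]

lemma summable_jacobiThetaZ {p : ℂ} (hp : ‖p‖ < 1) (x : ℂ) :
    Summable fun m : ℤ => p ^ (m ^ 2) * x ^ m := by
  refine .of_nat_of_neg ?_ ?_
  · simpa [zpow_natCast_sq] using summable_pow_sq_mul_pow hp x
  · simpa [zpow_natCast_sq] using summable_pow_sq_mul_pow hp x⁻¹

lemma summable_int_sq_mul_pow_sq {p : ℂ} (hp : ‖p‖ < 1) :
    Summable fun m : ℤ => (m : ℂ) ^ 2 * p ^ (m ^ 2) := by
  have h : Summable fun n : ℕ => (n : ℂ) ^ 2 * p ^ (n ^ 2) :=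
    .of_norm_bounded (summable_pow_mul_pow_mul_pow_sq 2 1 (norm_nonneg p) hp) fun n => by simp
  refine .of_nat_of_neg ?_ ?_ <;> simpa [zpow_natCast_sq] using h

/-- The character `z ^ (n - 1) + z ^ (n - 3) + ⋯ + z ^ (1 - n)` of the `n`-dimensional
irreducible representation of `sl₂`. -/
noncomputable def sl2Character (n : ℕ) (z : ℂ) : ℂ := ∑ i ∈ range n, z ^ i * z⁻¹ ^ (n - 1 - i)

lemma sl2Character_mul_sub_inv (n : ℕ) (z : ℂ) :
    sl2Character n z * (z - z⁻¹) = z ^ n - z⁻¹ ^ n :=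
  geom_sum₂_mul z z⁻¹ n

lemma sl2Character_one (n : ℕ) : sl2Character n 1 = n := by
  simp [sl2Character]

lemma norm_sl2Character_le {z : ℂ} {C : ℝ} (hC : 1 ≤ C) (hz : ‖z‖ ≤ C) (hz' : ‖z⁻¹‖ ≤ C)
    (n : ℕ) : ‖sl2Character n z‖ ≤ n * C ^ n := by
  calc ‖sl2Character n z‖ ≤ ∑ i ∈ range n, ‖z ^ i * z⁻¹ ^ (n - 1 - i)‖ := norm_sum_le _ _
    _ ≤ ∑ _i ∈ range n, C ^ n := sum_le_sum fun i hi => ?_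
    _ = n * C ^ n := by simp
  have hin : i < n := mem_range.mp hi
  rw [norm_mul, norm_pow, norm_pow]
  calc ‖z‖ ^ i * ‖z⁻¹‖ ^ (n - 1 - i) ≤ C ^ i * C ^ (n - 1 - i) := by gcongr
    _ = C ^ (i + (n - 1 - i)) := (pow_add ..).symm
    _ ≤ C ^ n := pow_le_pow_right₀ hC (by omega)

lemma continuousOn_sl2Character (n : ℕ) : ContinuousOn (sl2Character n) {0}ᶜ :=
  continuousOn_finsetSum _ fun i _ => (continuousOn_id.pow i).mul (continuousOn_inv₀.pow _)

noncomputable def sl2CharacterSeries (p : ℂ) (x : ℂ × ℂ) : ℂ :=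
  ∑' n : ℕ, p ^ (n ^ 2) * (sl2Character n x.1 * sl2Character n x.2)

lemma jacobiThetaZ_mul_sub_jacobiThetaZ_mul_inv {p : ℂ} (hp : ‖p‖ < 1) (z w : ℂ) :
    jacobiThetaZ p (z * w) - jacobiThetaZ p (z * w⁻¹) =
      sl2CharacterSeries p (z, w) * ((z - z⁻¹) * (w - w⁻¹)) := by
  set g : ℤ → ℂ := fun m => p ^ (m ^ 2) * (z * w) ^ m - p ^ (m ^ 2) * (z * w⁻¹) ^ m
  have hg : Summable g := (summable_jacobiThetaZ hp _).sub (summable_jacobiThetaZ hp _)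
  have hpair (n : ℕ) : g n + g (-n) =
      p ^ (n ^ 2) * (sl2Character n z * sl2Character n w) * ((z - z⁻¹) * (w - w⁻¹)) := by
    simp only [g, zpow_natCast_sq, neg_sq, zpow_neg, zpow_natCast, ← inv_pow, mul_inv, inv_inv]
    rw [mul_assoc, mul_mul_mul_comm, sl2Character_mul_sub_inv, sl2Character_mul_sub_inv]
    ring
  calc jacobiThetaZ p (z * w) - jacobiThetaZ p (z * w⁻¹) = ∑' m : ℤ, g m :=
        ((summable_jacobiThetaZ hp _).tsum_sub (summable_jacobiThetaZ hp _)).symm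
    _ = ∑' n : ℕ, (g n + g (-n)) := by rw [tsum_nat_add_neg hg]; simp [g]
    _ = _ := by simp_rw [hpair]; exact tsum_mul_right

lemma tsum_int_sq_mul_pow_sq {p : ℂ} (hp : ‖p‖ < 1) :
    ∑' m : ℤ, (m : ℂ) ^ 2 * p ^ (m ^ 2) = 2 * sl2CharacterSeries p (1, 1) := by
  have h := tsum_nat_add_neg (summable_int_sq_mul_pow_sq hp)
  rw [Int.cast_zero, zero_pow two_ne_zero, zero_mul, add_zero] at h
  rw [← h, sl2CharacterSeries, ← tsum_mul_left]
  congr 1 with n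
  simp [zpow_natCast_sq, sl2Character_one]
  ring

lemma continuousAt_sl2CharacterSeries {p : ℂ} (hp : ‖p‖ < 1) :
    ContinuousAt (sl2CharacterSeries p) (1, 1) := by
  set K : Set ℂ := norm ⁻¹' Set.Ioo 2⁻¹ 2
  have hK : K ∈ 𝓝 (1 : ℂ) :=
    continuous_norm.continuousAt.preimage_mem_nhds (Ioo_mem_nhds (by norm_num) (by norm_num))
  have hK0 : K ⊆ {0}ᶜ := fun z hz h0 => by
    rw [Set.mem_singleton_iff.mp h0] at hz; norm_num [K] at hz
  have hKbound {z : ℂ} (hz : z ∈ K) (n : ℕ) : ‖sl2Character n z‖ ≤ n * 2 ^ n := by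
    refine norm_sl2Character_le one_le_two hz.2.le ?_ n
    rw [norm_inv]
    exact inv_le_of_inv_le₀ (by norm_num) hz.1.le
  refine (continuousOn_tsum (fun n => ?_)
    (summable_pow_mul_pow_mul_pow_sq 2 4 (norm_nonneg p) hp) (fun n x hx => ?_)).continuousAt
    (prod_mem_nhds hK hK)
  · exact continuousOn_const.mul
      ((((continuousOn_sl2Character n).mono hK0).comp continuousOn_fst fun x hx => hx.1).mul
        (((continuousOn_sl2Character n).mono hK0).comp continuousOn_snd fun x hx => hx.2))
  · calc ‖p ^ (n ^ 2) * (sl2Character n x.1 * sl2Character n x.2)‖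
        ≤ ‖p‖ ^ (n ^ 2) * ((n * 2 ^ n) * (n * 2 ^ n)) := by
          rw [norm_mul, norm_mul, norm_pow]
          gcongr
          exacts [hKbound hx.1 n, hKbound hx.2 n]
      _ = (n : ℝ) ^ 2 * 4 ^ n * ‖p‖ ^ (n ^ 2) := by
          rw [show (4 : ℝ) = 2 * 2 by norm_num, mul_pow]; ring

section qProduct

variable {q : ℂ}

lemma summable_mul_norm_pow_succ (hq : ‖q‖ < 1) (c : ℝ) :
    Summable fun n : ℕ => c * ‖q‖ ^ (n + 1) := by
  refine ((summable_geometric_of_lt_one (norm_nonneg q) hq).mul_left (c * ‖q‖)).congr fun n => ?_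
  ring

lemma multipliable_one_sub_mul_pow_succ (hq : ‖q‖ < 1) (a : ℂ) :
    Multipliable fun n : ℕ => 1 - a * q ^ (n + 1) := by
  simpa [sub_eq_add_neg] using multipliable_one_add_of_summable (f := fun n => -(a * q ^ (n + 1)))
    (by simpa using summable_mul_norm_pow_succ hq ‖a‖)

lemma continuous_tprod_one_sub_mul_pow_succ (hq : ‖q‖ < 1) :
    Continuous fun a : ℂ => ∏' n : ℕ, (1 - a * q ^ (n + 1)) := by
  refine continuous_iff_continuousAt.mpr fun a => ?_
  set R := ‖a‖ + 1
  have hprod := Summable.hasProdUniformlyOn_nat_one_add (isCompact_closedBall (0 : ℂ) R)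
    (f := fun n x => -(x * q ^ (n + 1))) (summable_mul_norm_pow_succ hq R)
    (.of_forall fun n x hx => by
      simpa using mul_le_mul_of_nonneg_right (mem_closedBall_zero_iff.mp hx)
        (pow_nonneg (norm_nonneg q) _))
    (fun n => by fun_prop)
  simp only [← sub_eq_add_neg] at hprod
  exact (hprod.tendstoUniformlyOn.continuousOn (.of_forall fun s =>
    continuousOn_finsetProd s fun n _ => by fun_prop)).continuousAt
    (Metric.closedBall_mem_nhds_of_mem (by simp [R]))

lemma tprod_one_sub_pow_succ_ne_zero (hq : ‖q‖ < 1) : ∏' n : ℕ, (1 - q ^ (n + 1)) ≠ 0 := by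
  have hlt (n : ℕ) : ‖q ^ (n + 1)‖ < 1 := by
    rw [norm_pow]; exact pow_lt_one₀ (norm_nonneg q) hq n.succ_ne_zero
  simpa [sub_eq_add_neg] using tprod_one_add_ne_zero_of_summable (f := fun n => -q ^ (n + 1))
    (fun n h => (hlt n).ne (by rw [show q ^ (n + 1) = 1 by linear_combination -h, norm_one]))
    (by simpa using summable_mul_norm_pow_succ hq 1)

noncomputable def weylProd (q z : ℂ) : ℂ :=
  ∏' n : ℕ, ((1 - z ^ 2 * q ^ (n + 1)) * (1 - q ^ (n + 1)) * (1 - (z ^ 2)⁻¹ * q ^ (n + 1)))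

lemma weylPi_eq (u z : ℂ) : weylPi u z = u ^ 3 * (z - z⁻¹) * weylProd (u ^ 24) z := rfl

lemma weylProd_eq (hq : ‖q‖ < 1) (z : ℂ) :
    weylProd q z = (∏' n : ℕ, (1 - z ^ 2 * q ^ (n + 1))) * (∏' n : ℕ, (1 - q ^ (n + 1))) *
      ∏' n : ℕ, (1 - (z ^ 2)⁻¹ * q ^ (n + 1)) := by
  have h := multipliable_one_sub_mul_pow_succ hq
  have h1 := ModularForm.multipliable_one_sub_pow hq
  rw [weylProd, ((h _).mul h1).tprod_mul (h _), (h _).tprod_mul h1]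

lemma continuousAt_weylProd (hq : ‖q‖ < 1) {z : ℂ} (hz : z ≠ 0) : ContinuousAt (weylProd q) z := by
  have hE := continuous_tprod_one_sub_mul_pow_succ hq
  simp only [funext (weylProd_eq hq)]
  exact ((hE.continuousAt.comp (continuousAt_id.pow 2)).mul continuousAt_const).mul
    (hE.continuousAt.comp ((continuousAt_id.pow 2).inv₀ (pow_ne_zero 2 hz)))

lemma weylProd_one (hq : ‖q‖ < 1) : weylProd q 1 = (∏' n : ℕ, (1 - q ^ (n + 1))) ^ 3 := by
  rw [weylProd_eq hq]
  simp only [one_pow, inv_one, one_mul]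
  ring

end qProduct

/-- The character `f(z,w) = (θ(zw) - θ(zw⁻¹))/(Π(z)Π(w))` of the simple large `N=4`
superconformal algebra at central charge `-6` tends to `(∑_{m∈ℤ} m² p^(m²)) / (2η⁶)`
as `(z,w) → (1,1)` within the set where `Π(z)Π(w) ≠ 0`. Here `p = u¹²` so `q = p² = u²⁴`. -/
theorem character_limit_at_one (u : ℂ) (hu0 : 0 < ‖u‖) (hu1 : ‖u‖ < 1) :
    Filter.Tendsto
      (fun x : ℂ × ℂ =>
        (jacobiThetaZ (u ^ 12) (x.1 * x.2) - jacobiThetaZ (u ^ 12) (x.1 * x.2⁻¹)) /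
          (weylPi u x.1 * weylPi u x.2))
      (nhdsWithin (1, 1) {x : ℂ × ℂ | weylPi u x.1 * weylPi u x.2 ≠ 0})
      (nhds ((∑' m : ℤ, (m : ℂ) ^ 2 * (u ^ 12) ^ (m ^ 2)) / (2 * dedekindEta u ^ 6))) := by
  have hq : ‖u ^ 24‖ < 1 := by rw [norm_pow]; exact pow_lt_one₀ (norm_nonneg u) hu1 (by norm_num)
  have hp : ‖u ^ 12‖ < 1 := by rw [norm_pow]; exact pow_lt_one₀ (norm_nonneg u) hu1 (by norm_num)
  set D : ℂ × ℂ → ℂ := fun x => u ^ 3 * weylProd (u ^ 24) x.1 * (u ^ 3 * weylProd (u ^ 24) x.2)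
  have hP := continuousAt_weylProd hq one_ne_zero
  have hD : ContinuousAt D (1, 1) :=
    (continuousAt_const.mul (hP.comp_of_eq continuousAt_fst rfl)).mul
      (continuousAt_const.mul (hP.comp_of_eq continuousAt_snd rfl))
  have hD1 : D (1, 1) = dedekindEta u ^ 6 := by
    simp only [D, weylProd_one hq, dedekindEta]
    ring
  have hη : dedekindEta u ≠ 0 :=
    mul_ne_zero (norm_pos_iff.mp hu0) (tprod_one_sub_pow_succ_ne_zero hq)
  have hlim := (continuousAt_sl2CharacterSeries hp).div hD (hD1 ▸ pow_ne_zero 6 hη)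
  rw [tsum_int_sq_mul_pow_sq hp, ← hD1, mul_div_mul_left _ _ two_ne_zero]
  refine (hlim.tendsto.mono_left nhdsWithin_le_nhds).congr' (eventually_nhdsWithin_of_forall ?_)
  rintro ⟨z, w⟩ hzw
  have hne : (z - z⁻¹) * (w - w⁻¹) ≠ 0 := by
    have h : weylPi u z * weylPi u w ≠ 0 := hzw
    simp only [weylPi_eq, mul_ne_zero_iff] at h
    exact mul_ne_zero h.1.1.2 h.2.1.2
  simp only [Pi.div_apply]
  rw [jacobiThetaZ_mul_sub_jacobiThetaZ_mul_inv hp, weylPi_eq, weylPi_eq]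
  rw [show u ^ 3 * (z - z⁻¹) * weylProd (u ^ 24) z * (u ^ 3 * (w - w⁻¹) * weylProd (u ^ 24) w)
      = D (z, w) * ((z - z⁻¹) * (w - w⁻¹)) by simp only [D]; ring, mul_div_mul_right _ _ hne]
end

section
/- Fix u ∈ ℂ with 0 < |u| < 1 and set q = u^{24}, p = u^{12}. Define θ(x) = ∑_{m∈ℤ} p^{m²} x^m, Π(z) = u³ (z − z^{-1}) ∏_{n=1}^∞ (1 − z²qⁿ)(1 − qⁿ)(1 − z^{-2}qⁿ), η = u ∏_{n=1}^∞ (1 − qⁿ), and S(z) = u² ∏_{n=1}^∞ (1 − z²qⁿ)(1 − z^{-2}q^{n−1}). Fix w ∈ ℂ ∖ {0} with Π(w) ≠ 0. Then the function z ↦ (θ(zw) − θ(zw^{-1})) · S(z) / (Π(z)Π(w)), defined on {z ∈ ℂ ∖ {0} : Π(z) ≠ 0}, tends to u^{12} · (θ(u^{-12} w) − θ(u^{-12} w^{-1})) / (η · Π(w)) as z → u^{-12} within that set. -/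
/-!
Splitting off the `n = 0` factor `1 - z⁻²` of the ghost product gives the factorisation
`Π(z) = z η S(z)`, so where `Π(z) ≠ 0` the function equals `(θ(zw) - θ(zw⁻¹)) / (z η Π(w))`.
On annuli the terms of the theta series are dominated by `|p|^(m²) M^|m|`, so `θ` is continuous
on `ℂ ∖ {0}`; hence this expression is continuous at `z = u⁻¹²` and the limit is its value there.
-/

open Filter Topology

lemma multipliable_one_sub_mul_pow {R : Type*} [NormedCommRing R] [NormOneClass R]
    [CompleteSpace R] (c : R) {q : R} (hq : ‖q‖ < 1) :
    Multipliable fun n : ℕ => 1 - c * q ^ n := by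
  have hsum : Summable fun n : ℕ => ‖-(c * q ^ n)‖ := by
    refine .of_nonneg_of_le (fun _ => norm_nonneg _) (fun n => ?_)
      ((summable_geometric_of_lt_one (norm_nonneg q) hq).mul_left ‖c‖)
    rw [norm_neg]
    exact (norm_mul_le _ _).trans (by gcongr; exact norm_pow_le q n)
  simpa only [sub_eq_add_neg] using multipliable_one_add_of_summable hsum

lemma tprod_one_sub_mul_pow_eq {R : Type*} [NormedCommRing R] [NormOneClass R]
    [CompleteSpace R] (c : R) {q : R} (hq : ‖q‖ < 1) :
    ∏' n : ℕ, (1 - c * q ^ n) = (1 - c) * ∏' n : ℕ, (1 - c * q ^ (n + 1)) := by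
  have h : Multipliable fun n : ℕ => 1 - c * q ^ (n + 1) := by
    simpa only [mul_assoc, ← pow_succ'] using multipliable_one_sub_mul_pow (c * q) hq
  rw [tprod_eq_zero_mul' (f := fun n => 1 - c * q ^ n) h, pow_zero, mul_one]

lemma summable_pow_sq_mul_pow_s3 {r : ℝ} (hr0 : 0 ≤ r) (hr : r < 1) (M : ℝ) :
    Summable fun n : ℕ => r ^ (n ^ 2) * M ^ n := by
  have hsmall : ∀ᶠ n : ℕ in atTop, ‖r ^ n * M‖ ≤ 1 / 2 := by
    have : Tendsto (fun n : ℕ => ‖r ^ n * M‖) atTop (𝓝 0) := by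
      simpa using ((tendsto_pow_atTop_nhds_zero_of_lt_one hr0 hr).mul_const M).norm
    exact this.eventually (eventually_le_nhds (by norm_num))
  refine .of_norm_bounded_eventually_nat summable_geometric_two ?_
  filter_upwards [hsmall] with n hn
  rw [sq, pow_mul, ← mul_pow, norm_pow]
  exact pow_le_pow_left₀ (norm_nonneg _) hn n

lemma summable_pow_natAbs_sq_mul_pow {r : ℝ} (hr0 : 0 ≤ r) (hr : r < 1) (M : ℝ) :
    Summable fun m : ℤ => r ^ (m.natAbs ^ 2) * M ^ m.natAbs :=
  .of_nat_of_neg (by simpa using summable_pow_sq_mul_pow_s3 hr0 hr M)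
    (by simpa using summable_pow_sq_mul_pow_s3 hr0 hr M)

lemma norm_zpow_le_max_pow_natAbs {K : Type*} [NormedDivisionRing K] {x : K} {r R : ℝ}
    (hr : 0 < r) (hrx : r ≤ ‖x‖) (hxR : ‖x‖ ≤ R) (m : ℤ) :
    ‖x ^ m‖ ≤ max R r⁻¹ ^ m.natAbs := by
  rcases Int.natAbs_eq m with hm | hm <;> rw [hm]
  · rw [zpow_natCast, norm_pow, Int.natAbs_natCast]
    exact pow_le_pow_left₀ (norm_nonneg x) (hxR.trans (le_max_left _ _)) _
  · rw [zpow_neg, zpow_natCast, norm_inv, norm_pow, Int.natAbs_neg, Int.natAbs_natCast, ← inv_pow]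
    exact pow_le_pow_left₀ (by positivity)
      ((inv_anti₀ hr hrx).trans (le_max_right _ _)) _

lemma norm_zpow_sq_eq_pow_natAbs_sq {K : Type*} [NormedDivisionRing K] (p : K) (m : ℤ) :
    ‖p ^ (m ^ 2)‖ = ‖p‖ ^ (m.natAbs ^ 2) := by
  rw [norm_zpow, ← Int.natAbs_sq, ← Int.natCast_pow, zpow_natCast]

lemma continuousOn_jacobiThetaZ_annulus {p : ℂ} (hp : ‖p‖ < 1) {r R : ℝ} (hr : 0 < r) :
    ContinuousOn (jacobiThetaZ p) {x | r < ‖x‖ ∧ ‖x‖ < R} := by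
  refine continuousOn_tsum (fun m => ?_)
    (summable_pow_natAbs_sq_mul_pow (norm_nonneg p) hp (max R r⁻¹)) (fun m x hx => ?_)
  · refine continuousOn_const.mul (continuousOn_id.zpow₀ m fun x hx => Or.inl ?_)
    exact norm_pos_iff.mp (hr.trans hx.1)
  · rw [norm_mul, norm_zpow_sq_eq_pow_natAbs_sq]
    gcongr
    exact norm_zpow_le_max_pow_natAbs hr hx.1.le hx.2.le m

lemma continuousAt_jacobiThetaZ {p x : ℂ} (hp : ‖p‖ < 1) (hx : x ≠ 0) :
    ContinuousAt (jacobiThetaZ p) x := by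
  have hx0 : 0 < ‖x‖ := norm_pos_iff.mpr hx
  have hann : IsOpen {y : ℂ | ‖x‖ / 2 < ‖y‖ ∧ ‖y‖ < 2 * ‖x‖} :=
    (isOpen_lt continuous_const continuous_norm).inter (isOpen_lt continuous_norm continuous_const)
  exact (continuousOn_jacobiThetaZ_annulus hp (half_pos hx0)).continuousAt
    (hann.mem_nhds ⟨half_lt_self hx0, by linarith⟩)

lemma weylPi_eq_mul_dedekindEta_mul_ghostSch {u : ℂ} (hu : ‖u‖ < 1) {z : ℂ} (hz : z ≠ 0) :
    weylPi u z = z * dedekindEta u * ghostSch u z := by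
  have hq : ‖u ^ 24‖ < 1 := by
    rw [norm_pow]; exact pow_lt_one₀ (norm_nonneg u) hu (by norm_num)
  have hA := multipliable_one_sub_mul_pow (z ^ 2 * u ^ 24) hq
  have hB := multipliable_one_sub_mul_pow (u ^ 24) hq
  have hC := multipliable_one_sub_mul_pow ((z ^ 2)⁻¹ * u ^ 24) hq
  have hD := multipliable_one_sub_mul_pow (z ^ 2)⁻¹ hq
  simp only [mul_assoc, ← pow_succ'] at hA hB hC
  have hzz : z - z⁻¹ = z * (1 - (z ^ 2)⁻¹) := by field_simp
  rw [weylPi, dedekindEta, ghostSch, (hA.mul hB).tprod_mul hC, hA.tprod_mul hB, hA.tprod_mul hD,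
    tprod_one_sub_mul_pow_eq _ hq, hzz]
  ring

lemma ghostSch_div_weylPi {u z : ℂ} (hu : ‖u‖ < 1) (hz : z ≠ 0) (hPz : weylPi u z ≠ 0) :
    ghostSch u z / weylPi u z = (z * dedekindEta u)⁻¹ := by
  rw [weylPi_eq_mul_dedekindEta_mul_ghostSch hu hz] at hPz ⊢
  field_simp [right_ne_zero_of_mul hPz]

/-- Fix `w ≠ 0` with `Π(w) ≠ 0`. Then `(θ(zw) - θ(zw⁻¹)) S(z) / (Π(z)Π(w))` tends to
`u¹² (θ(u⁻¹²w) - θ(u⁻¹²w⁻¹)) / (η Π(w))` as `z → u⁻¹² = q^(-1/2)` within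
`{z ≠ 0 : Π(z) ≠ 0}`. This computes the character of the quantum Hamiltonian reduction
on one affine `sl₂` factor, matching the character of `V_{k₂}(osp(1|2))`. -/
theorem character_limit_one_reduction (u w : ℂ)
    (hu0 : 0 < ‖u‖) (hu1 : ‖u‖ < 1)
    (hw : w ≠ 0) (hPw : weylPi u w ≠ 0) :
    Filter.Tendsto
      (fun z : ℂ =>
        (jacobiThetaZ (u ^ 12) (z * w) - jacobiThetaZ (u ^ 12) (z * w⁻¹)) * ghostSch u z /
          (weylPi u z * weylPi u w))
      (nhdsWithin ((u ^ 12)⁻¹) {z : ℂ | z ≠ 0 ∧ weylPi u z ≠ 0})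
      (nhds (u ^ 12 *
          (jacobiThetaZ (u ^ 12) ((u ^ 12)⁻¹ * w) - jacobiThetaZ (u ^ 12) ((u ^ 12)⁻¹ * w⁻¹)) /
        (dedekindEta u * weylPi u w))) := by
  have hp0 : u ^ 12 ≠ 0 := pow_ne_zero 12 (norm_pos_iff.mp hu0)
  have hp : ‖u ^ 12‖ < 1 := by
    rw [norm_pow]; exact pow_lt_one₀ (norm_nonneg u) hu1 (by norm_num)
  have hη : dedekindEta u ≠ 0 := by
    rw [weylPi_eq_mul_dedekindEta_mul_ghostSch hu1 hw] at hPw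
    exact right_ne_zero_of_mul (left_ne_zero_of_mul hPw)
  have hθ (v : ℂ) (hv : v ≠ 0) :
      ContinuousAt (fun z => jacobiThetaZ (u ^ 12) (z * v)) (u ^ 12)⁻¹ :=
    (continuousAt_jacobiThetaZ hp (mul_ne_zero (inv_ne_zero hp0) hv)).comp (f := (· * v))
      (continuous_mul_const v).continuousAt
  have hreduced : ContinuousAt (fun z => (jacobiThetaZ (u ^ 12) (z * w) -
      jacobiThetaZ (u ^ 12) (z * w⁻¹)) * (z * dedekindEta u)⁻¹ / weylPi u w) (u ^ 12)⁻¹ :=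
    (((hθ w hw).sub (hθ w⁻¹ (inv_ne_zero hw))).mul
      ((continuousAt_id.mul continuousAt_const).inv₀ (by simp [hp0, hη]))).div_const _
  convert (hreduced.tendsto.mono_left nhdsWithin_le_nhds).congr'
    (eventuallyEq_of_mem self_mem_nhdsWithin ?_) using 2
  · field_simp
  · rintro z ⟨hz, hPz⟩
    dsimp only
    rw [div_mul_eq_div_div, mul_div_assoc _ (ghostSch u z), ghostSch_div_weylPi hu1 hz hPz]
end
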